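/- arXiv:2210.08361 — 4 statements merged into one kernel-verified Lean document; each statement's English description precedes it below -/
import Mathlib

section
/- Let d ≥ 1 be an integer, z ≥ 1 a real number, k ≥ 1 an integer, and γ ≥ 1 a real number. Let X ⊆ ℝ^d be a nonempty finite set and let C* ⊆ ℝ^d be a nonempty finite set. Let OPT := inf over all sets C ⊆ ℝ^d with |C| = k of cost_z(X, C), and assume OPT > 0 and that cost_z(X, C*) ≤ γ · cost_z(X, C) for every set C ⊆ ℝ^d with |C| = k. Let d̃ : ℝ^d × ℝ^d → ℝ≥0 be a function such that (1/2)·d_z(a, b) ≤ d̃(a, b) ≤ 2·d_z(a, b) for all a, b ∈ ℝ^d, where d_z(a, b) := ‖a − b‖₂^z. For each x ∈ X, let c*(x) ∈ C* be a point minimizing d_z(x, c) over c ∈ C*, and let c̃*(x) ∈ C* be a point minimizing d̃(x, c) over c ∈ C*. For x ∈ X, let X_{c̃*(x)} := {y ∈ X : c̃*(y) = c̃*(x)}. Then for every x ∈ X and every set C ⊆ ℝ^d with |C| = k, d_z(x, C)/cost_z(X, C) ≤ 8 · ( 2^z · d_z(x, c*(x))/OPT + 2^{2z} · γ / |X_{c̃*(x)}|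 ). -/
open scoped Classical
open Finset

/-- `dz z x C` is d_z(x, C) = min_{c ∈ C} ‖x − c‖₂^z (and 0 if C is empty). -/
noncomputable def dz {d : ℕ} (z : ℝ) (x : EuclideanSpace ℝ (Fin d))
    (C : Finset (EuclideanSpace ℝ (Fin d))) : ℝ :=
  if h : C.Nonempty then C.inf' h (fun c => ‖x - c‖ ^ z) else 0

/-- `costz z U C` is cost_z(U, C) = Σ_{x ∈ U} d_z(x, C). -/
noncomputable def costz {d : ℕ} (z : ℝ) (U C : Finset (EuclideanSpace ℝ (Fin d))) : ℝ :=
  ∑ x ∈ U, dz z x C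

lemma two_rpow_bound (z : ℝ) (hz : 1 ≤ z) (a b : ℝ) (ha : 0 ≤ a) (hb : 0 ≤ b) :
    (a + b) ^ z ≤ 2 ^ z * (a ^ z + b ^ z) := by
  have hz0 : (0:ℝ) ≤ z := by linarith
  have hm : a + b ≤ 2 * max a b := by
    rcases le_total a b with h | h
    · simp [max_eq_right h]; linarith
    · simp [max_eq_left h]; linarith
  have hmax : (0:ℝ) ≤ max a b := le_trans ha (le_max_left _ _)
  calc (a + b) ^ z ≤ (2 * max a b) ^ z :=
        Real.rpow_le_rpow (by linarith) hm hz0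
    _ = 2 ^ z * (max a b) ^ z := Real.mul_rpow (by norm_num) hmax
    _ ≤ 2 ^ z * (a ^ z + b ^ z) := by
        have h2 : (0:ℝ) < 2 ^ z := Real.rpow_pos_of_pos (by norm_num) _
        have : (max a b) ^ z ≤ a ^ z + b ^ z := by
          rcases le_total a b with h | h
          · rw [max_eq_right h]
            have := Real.rpow_nonneg ha z
            linarith
          · rw [max_eq_left h]
            have := Real.rpow_nonneg hb z
            linarith
        nlinarith

lemma dz_nonneg {d : ℕ} (z : ℝ) (x : EuclideanSpace ℝ (Fin d))
    (C : Finset (EuclideanSpace ℝ (Fin d))) : 0 ≤ dz z x C := by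
  unfold dz
  split
  · exact Finset.le_inf' _ _ (fun c _ => Real.rpow_nonneg (norm_nonneg _) _)
  · exact le_refl 0

lemma dz_le {d : ℕ} (z : ℝ) (x c : EuclideanSpace ℝ (Fin d))
    {C : Finset (EuclideanSpace ℝ (Fin d))} (hc : c ∈ C) : dz z x C ≤ ‖x - c‖ ^ z := by
  unfold dz
  rw [dif_pos ⟨c, hc⟩]
  exact Finset.inf'_le _ hc

/-- **Sensitivity upper bound.** Given a γ-approximate center set C* and a 2-approximate
distance function d̃ with exact/approximate closest-center assignments c* and c̃*, for
every x ∈ X and every k-point center set C,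
d_z(x, C)/cost_z(X, C) ≤ 8 · (2^z · d_z(x, c*(x))/OPT + 2^{2z} · γ / |X_{c̃*(x)}|). -/
theorem sensitivity_upper_bound (d : ℕ) (hd : 1 ≤ d) (z : ℝ) (hz : 1 ≤ z)
    (k : ℕ) (hk : 1 ≤ k) (γ : ℝ) (hγ : 1 ≤ γ)
    (X Cstar : Finset (EuclideanSpace ℝ (Fin d))) (hX : X.Nonempty) (hCstar : Cstar.Nonempty)
    (OPT : ℝ)
    (hOPT : OPT = sInf {r : ℝ |
      ∃ C : Finset (EuclideanSpace ℝ (Fin d)), C.card = k ∧ r = costz z X C})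
    (hOPTpos : 0 < OPT)
    (happrox : ∀ C : Finset (EuclideanSpace ℝ (Fin d)), C.card = k →
      costz z X Cstar ≤ γ * costz z X C)
    (dt : EuclideanSpace ℝ (Fin d) → EuclideanSpace ℝ (Fin d) → ℝ)
    (hdt0 : ∀ a b, 0 ≤ dt a b)
    (hdt : ∀ a b, (1 / 2) * ‖a - b‖ ^ z ≤ dt a b ∧ dt a b ≤ 2 * ‖a - b‖ ^ z)
    (cs ct : EuclideanSpace ℝ (Fin d) → EuclideanSpace ℝ (Fin d))
    (hcs : ∀ x ∈ X, cs x ∈ Cstar ∧ ∀ c ∈ Cstar, ‖x - cs x‖ ^ z ≤ ‖x - c‖ ^ z)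
    (hct : ∀ x ∈ X, ct x ∈ Cstar ∧ ∀ c ∈ Cstar, dt x (ct x) ≤ dt x c) :
    ∀ x ∈ X, ∀ C : Finset (EuclideanSpace ℝ (Fin d)), C.card = k →
      dz z x C / costz z X C ≤
        8 * ((2 : ℝ) ^ z * (‖x - cs x‖ ^ z) / OPT +
          (2 : ℝ) ^ (2 * z) * γ / ((X.filter (fun y => ct y = ct x)).card : ℝ)) := by
  intro x hx C hC
  have hz0 : (0:ℝ) ≤ z := by linarith
  have hCne : C.Nonempty := Finset.card_pos.mp (by omega)
  set B := X.filter (fun y => ct y = ct x) with hBdef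
  have hxB : x ∈ B := Finset.mem_filter.mpr ⟨hx, rfl⟩
  have hBpos : 0 < B.card := Finset.card_pos.mpr ⟨x, hxB⟩
  have hn : (0:ℝ) < (B.card : ℝ) := by exact_mod_cast hBpos
  -- cost lower bound
  have hcostnn : ∀ D : Finset (EuclideanSpace ℝ (Fin d)), 0 ≤ costz z X D := fun D =>
    Finset.sum_nonneg (fun y _ => dz_nonneg z y D)
  have hOPTle : OPT ≤ costz z X C := by
    rw [hOPT]
    apply csInf_le
    · exact ⟨0, fun r hr => by obtain ⟨D, _, rfl⟩ := hr; exact hcostnn D⟩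
    · exact ⟨C, hC, rfl⟩
  have hSpos : 0 < costz z X C := lt_of_lt_of_le hOPTpos hOPTle
  have hP : (0:ℝ) < 2 ^ z := Real.rpow_pos_of_pos (by norm_num) _
  have hQ : (0:ℝ) < 2 ^ (2*z) := Real.rpow_pos_of_pos (by norm_num) _
  have hQP : (2:ℝ) ^ (2*z) = 2 ^ z * 2 ^ z := by
    rw [two_mul, Real.rpow_add (by norm_num)]
  -- dz y Cstar bounds
  have hclose : ∀ y ∈ X, ‖y - cs y‖ ^ z ≤ dz z y Cstar := by
    intro y hy
    unfold dz
    rw [dif_pos hCstar]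
    exact Finset.le_inf' _ _ (fun c hc => (hcs y hy).2 c hc)
  -- for y ∈ B : ‖y - ct x‖ ^ z ≤ 4 * dz z y Cstar
  have h1 : ∀ y ∈ B, ‖y - ct x‖ ^ z ≤ 4 * dz z y Cstar := by
    intro y hy
    obtain ⟨hyX, hty⟩ := Finset.mem_filter.mp hy
    have e1 : (1/2 : ℝ) * ‖y - ct y‖ ^ z ≤ dt y (ct y) := (hdt y (ct y)).1
    have e2 : dt y (ct y) ≤ dt y (cs y) := (hct y hyX).2 (cs y) (hcs y hyX).1
    have e3 : dt y (cs y) ≤ 2 * ‖y - cs y‖ ^ z := (hdt y (cs y)).2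
    have e4 := hclose y hyX
    rw [← hty]
    linarith
  have h4 : ‖x - ct x‖ ^ z ≤ 4 * ‖x - cs x‖ ^ z := by
    have e1 : (1/2 : ℝ) * ‖x - ct x‖ ^ z ≤ dt x (ct x) := (hdt x (ct x)).1
    have e2 : dt x (ct x) ≤ dt x (cs x) := (hct x hx).2 (cs x) (hcs x hx).1
    have e3 : dt x (cs x) ≤ 2 * ‖x - cs x‖ ^ z := (hdt x (cs x)).2
    linarith
  -- per-point key inequality
  have key : ∀ y ∈ B, dz z x C ≤
      2 ^ z * ‖x - ct x‖ ^ z + 2 ^ (2*z) * (‖y - ct x‖ ^ z + dz z y C) := by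
    intro y _
    obtain ⟨c, hcC, hceq⟩ := Finset.exists_mem_eq_inf' hCne (fun c => ‖y - c‖ ^ z)
    have hdzy : dz z y C = ‖y - c‖ ^ z := by rw [dz, dif_pos hCne, hceq]
    have h0 : dz z x C ≤ ‖x - c‖ ^ z := dz_le z x c hcC
    have tri : ‖x - c‖ ≤ ‖x - ct x‖ + (‖y - ct x‖ + ‖y - c‖) := by
      have h := dist_triangle4 x (ct x) y c
      rw [dist_eq_norm, dist_eq_norm, dist_eq_norm, dist_eq_norm] at h
      have hrev : ‖ct x - y‖ = ‖y - ct x‖ := norm_sub_rev _ _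
      linarith
    have s1 : ‖x - c‖ ^ z ≤ (‖x - ct x‖ + (‖y - ct x‖ + ‖y - c‖)) ^ z :=
      Real.rpow_le_rpow (norm_nonneg _) tri hz0
    have s2 : (‖x - ct x‖ + (‖y - ct x‖ + ‖y - c‖)) ^ z ≤
        2 ^ z * (‖x - ct x‖ ^ z + (‖y - ct x‖ + ‖y - c‖) ^ z) :=
      two_rpow_bound z hz _ _ (norm_nonneg _) (by positivity)
    have s3 : (‖y - ct x‖ + ‖y - c‖) ^ z ≤ 2 ^ z * (‖y - ct x‖ ^ z + ‖y - c‖ ^ z) :=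
      two_rpow_bound z hz _ _ (norm_nonneg _) (norm_nonneg _)
    rw [hdzy, hQP]
    nlinarith [hP.le]
  -- sum over B
  have hsum : (B.card : ℝ) * dz z x C ≤
      (B.card : ℝ) * (2 ^ z * ‖x - ct x‖ ^ z) +
        2 ^ (2*z) * (∑ y ∈ B, (‖y - ct x‖ ^ z + dz z y C)) := by
    calc (B.card : ℝ) * dz z x C = ∑ _y ∈ B, dz z x C := by
          rw [Finset.sum_const, nsmul_eq_mul]
      _ ≤ ∑ y ∈ B, (2 ^ z * ‖x - ct x‖ ^ z + 2 ^ (2*z) * (‖y - ct x‖ ^ z + dz z y C)) :=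
          Finset.sum_le_sum key
      _ = (B.card : ℝ) * (2 ^ z * ‖x - ct x‖ ^ z) +
          2 ^ (2*z) * (∑ y ∈ B, (‖y - ct x‖ ^ z + dz z y C)) := by
          rw [Finset.sum_add_distrib, Finset.sum_const, nsmul_eq_mul, ← Finset.mul_sum]
  have hsub1 : ∑ y ∈ B, ‖y - ct x‖ ^ z ≤ 4 * costz z X Cstar := by
    calc ∑ y ∈ B, ‖y - ct x‖ ^ z ≤ ∑ y ∈ B, 4 * dz z y Cstar := Finset.sum_le_sum h1
      _ = 4 * ∑ y ∈ B, dz z y Cstar := by rw [Finset.mul_sum]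
      _ ≤ 4 * costz z X Cstar := by
          have : ∑ y ∈ B, dz z y Cstar ≤ costz z X Cstar :=
            Finset.sum_le_sum_of_subset_of_nonneg (Finset.filter_subset _ _)
              (fun y hy _ => dz_nonneg z y Cstar)
          linarith
  have hsub2 : ∑ y ∈ B, dz z y C ≤ costz z X C :=
    Finset.sum_le_sum_of_subset_of_nonneg (Finset.filter_subset _ _)
      (fun y hy _ => dz_nonneg z y C)
  have hgs : costz z X Cstar ≤ γ * costz z X C := happrox C hC
  -- combine
  set n := (B.card : ℝ)
  set S := costz z X C
  set A := ‖x - cs x‖ ^ z with hA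
  have hAnn : 0 ≤ A := Real.rpow_nonneg (norm_nonneg _) _
  have hDnn : 0 ≤ dz z x C := dz_nonneg z x C
  have hmain : n * dz z x C ≤ 4 * n * (2 ^ z * A) + 5 * (2 ^ (2*z) * γ) * S := by
    have hsplit : ∑ y ∈ B, (‖y - ct x‖ ^ z + dz z y C)
        = (∑ y ∈ B, ‖y - ct x‖ ^ z) + ∑ y ∈ B, dz z y C := Finset.sum_add_distrib
    have h5 : ∑ y ∈ B, (‖y - ct x‖ ^ z + dz z y C) ≤ 5 * γ * S := by
      rw [hsplit]
      nlinarith [hSpos, hγ, hsub1, hgs, hsub2]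
    have h4' : n * (2 ^ z * ‖x - ct x‖ ^ z) ≤ 4 * n * (2 ^ z * A) := by
      calc n * (2 ^ z * ‖x - ct x‖ ^ z) ≤ n * (2 ^ z * (4 * A)) :=
            mul_le_mul_of_nonneg_left (mul_le_mul_of_nonneg_left h4 hP.le) hn.le
        _ = 4 * n * (2 ^ z * A) := by ring
    have hQ' : 2 ^ (2*z) * (∑ y ∈ B, (‖y - ct x‖ ^ z + dz z y C))
        ≤ 5 * (2 ^ (2*z) * γ) * S := by
      calc 2 ^ (2*z) * (∑ y ∈ B, (‖y - ct x‖ ^ z + dz z y C))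
          ≤ 2 ^ (2*z) * (5 * γ * S) := mul_le_mul_of_nonneg_left h5 hQ.le
        _ = 5 * (2 ^ (2*z) * γ) * S := by ring
    linarith [hsum]
  -- divide
  have step : dz z x C / S ≤ 4 * (2 ^ z * A / S) + 5 * (2 ^ (2*z) * γ / n) := by
    rw [div_le_iff₀ hSpos]
    have hS0 : S ≠ 0 := ne_of_gt hSpos
    have hn0 : n ≠ 0 := ne_of_gt hn
    have expand : n * ((4 * (2 ^ z * A / S) + 5 * (2 ^ (2*z) * γ / n)) * S)
        = 4 * n * (2 ^ z * A) + 5 * (2 ^ (2*z) * γ) * S := by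
      field_simp
    have hkey : n * dz z x C ≤ n * ((4 * (2 ^ z * A / S) + 5 * (2 ^ (2*z) * γ / n)) * S) := by
      rw [expand]; exact hmain
    exact le_of_mul_le_mul_left hkey hn
  have t1 : 2 ^ z * A / S ≤ 2 ^ z * A / OPT :=
    div_le_div_of_nonneg_left (by positivity) hOPTpos hOPTle
  have t2 : (0:ℝ) < 2 ^ (2*z) * γ / n := by positivity
  calc dz z x C / S ≤ 4 * (2 ^ z * A / S) + 5 * (2 ^ (2*z) * γ / n) := step
    _ ≤ 8 * (2 ^ z * A / OPT + 2 ^ (2*z) * γ / n) := by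
        have : (0:ℝ) ≤ 2 ^ z * A / OPT := by positivity
        linarith
end

section
/- Let d ≥ 1 be an integer and z ≥ 1 a real number. Let X ⊆ ℝ^d be a nonempty finite set, let C* ⊆ ℝ^d be a nonempty finite set, and let C ⊆ ℝ^d be a nonempty finite set. Let d̃ : ℝ^d × ℝ^d → ℝ≥0 be a function such that (1/2)·d_z(a, b) ≤ d̃(a, b) ≤ 2·d_z(a, b) for all a, b ∈ ℝ^d, where d_z(a, b) := ‖a − b‖₂^z. For each x ∈ X, let c*(x) ∈ C* be a point minimizing d_z(x, c) over c ∈ C*, and let c̃*(x) ∈ C* be a point minimizing d̃(x, c) over c ∈ C*. For x ∈ X, let X_{c̃*(x)} := {y ∈ X : c̃*(y) = c̃*(x)}. Then for every x ∈ X, d_z(x, C) ≤ 2^{z+2} · d_z(x, c*(x)) + (2^{2z+2} / |X_{c̃*(x)}|) · ( cost_z(X, C*) + cost_z(X, C) ). -/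
open scoped Classical
open Finset
set_option maxHeartbeats 1000000

lemma mean2_aux {a b p : ℝ} (ha : 0 ≤ a) (hb : 0 ≤ b) (hp : 1 ≤ p) :
    (a + b) ^ p ≤ 2 ^ (p - 1) * (a ^ p + b ^ p) := by
  lift a to NNReal using ha
  lift b to NNReal using hb
  exact_mod_cast NNReal.rpow_add_le_mul_rpow_add_rpow a b hp

/-- **Pointwise cost bound.** With a 2-approximate distance d̃, exact closest-center map
c* and approximate closest-center map c̃* with clusters X_{c̃*(x)}, for every x ∈ X:
d_z(x, C) ≤ 2^{z+2} · d_z(x, c*(x)) + (2^{2z+2}/|X_{c̃*(x)}|) · (cost_z(X, C*) + cost_z(X, C)). -/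
theorem pointwise_cost_bound (d : ℕ) (hd : 1 ≤ d) (z : ℝ) (hz : 1 ≤ z)
    (X Cstar C : Finset (EuclideanSpace ℝ (Fin d)))
    (hX : X.Nonempty) (hCstar : Cstar.Nonempty) (hC : C.Nonempty)
    (dt : EuclideanSpace ℝ (Fin d) → EuclideanSpace ℝ (Fin d) → ℝ)
    (hdt0 : ∀ a b, 0 ≤ dt a b)
    (hdt : ∀ a b, (1 / 2) * ‖a - b‖ ^ z ≤ dt a b ∧ dt a b ≤ 2 * ‖a - b‖ ^ z)
    (cs ct : EuclideanSpace ℝ (Fin d) → EuclideanSpace ℝ (Fin d))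
    (hcs : ∀ x ∈ X, cs x ∈ Cstar ∧ ∀ c ∈ Cstar, ‖x - cs x‖ ^ z ≤ ‖x - c‖ ^ z)
    (hct : ∀ x ∈ X, ct x ∈ Cstar ∧ ∀ c ∈ Cstar, dt x (ct x) ≤ dt x c) :
    ∀ x ∈ X,
      dz z x C ≤ (2 : ℝ) ^ (z + 2) * (‖x - cs x‖ ^ z) +
        ((2 : ℝ) ^ (2 * z + 2) / ((X.filter (fun y => ct y = ct x)).card : ℝ)) *
          (costz z X Cstar + costz z X C) := by
  intro x hx
  set P := X.filter (fun y => ct y = ct x) with hP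
  have hxP : x ∈ P := by simp [hP, hx]
  have hn : (0 : ℝ) < (P.card : ℝ) := by
    exact_mod_cast Finset.card_pos.mpr ⟨x, hxP⟩
  have hzpos : (0 : ℝ) ≤ z := le_trans zero_le_one hz
  set c := (2 : ℝ) ^ (z - 1) with hcdef
  have hc0 : (0 : ℝ) ≤ c := Real.rpow_nonneg (by norm_num) _
  have h22 : (2 : ℝ) ^ (2 : ℝ) = 4 := by
    rw [show (2 : ℝ) = ((2 : ℕ) : ℝ) from by norm_num, Real.rpow_natCast]; norm_num
  have e1 : (2 : ℝ) ^ (z + 1) = 4 * c := by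
    rw [hcdef, show z + 1 = (z - 1) + 2 by ring, Real.rpow_add two_pos, h22]; ring
  have e2 : (2 : ℝ) ^ (2 * z) = 4 * (c * c) := by
    rw [hcdef, show 2 * z = (z - 1) + ((z - 1) + 2) by ring, Real.rpow_add two_pos,
      Real.rpow_add two_pos, h22]; ring
  have e3 : (2 : ℝ) ^ (2 * z - 2) = c * c := by
    rw [hcdef, show 2 * z - 2 = (z - 1) + (z - 1) by ring, Real.rpow_add two_pos]
  have m1 : (2 : ℝ) ^ (z + 1) ≤ (2 : ℝ) ^ (z + 2) :=
    Real.rpow_le_rpow_of_exponent_le one_le_two (by linarith)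
  have m2 : (2 : ℝ) ^ (2 * z) ≤ (2 : ℝ) ^ (2 * z + 2) :=
    Real.rpow_le_rpow_of_exponent_le one_le_two (by linarith)
  have m3 : c * c ≤ (2 : ℝ) ^ (2 * z + 2) := by
    rw [← e3]
    exact Real.rpow_le_rpow_of_exponent_le one_le_two (by linarith)
  set S := ‖x - cs x‖ ^ z with hSdef
  have hS0 : (0 : ℝ) ≤ S := Real.rpow_nonneg (norm_nonneg _) _
  -- bound on approximate nearest centers
  have happrox : ∀ y ∈ X, ‖y - ct y‖ ^ z ≤ 4 * (‖y - cs y‖ ^ z) := by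
    intro y hy
    have h1 := (hdt y (ct y)).1
    have h2 := (hct y hy).2 (cs y) (hcs y hy).1
    have h3 := (hdt y (cs y)).2
    linarith
  have hdzCstar : ∀ y ∈ X, ‖y - cs y‖ ^ z ≤ dz z y Cstar := by
    intro y hy
    unfold dz
    rw [dif_pos hCstar]
    obtain ⟨cc, hcc, hcce⟩ := Finset.exists_mem_eq_inf' hCstar (fun cc => ‖y - cc‖ ^ z)
    rw [hcce]
    exact (hcs y hy).2 cc hcc
  -- key pointwise bound for each y in the cluster
  have key : ∀ y ∈ P, dz z x C ≤ (2 : ℝ) ^ (z + 2) * S +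
      (2 : ℝ) ^ (2 * z + 2) * (dz z y Cstar + dz z y C) := by
    intro y hyP
    have hyX : y ∈ X := Finset.mem_of_mem_filter y hyP
    have hcty : ct y = ct x := by
      have := Finset.mem_filter.mp hyP
      exact this.2
    obtain ⟨cy, hcyC, hcye⟩ := Finset.exists_mem_eq_inf' hC (fun cc => ‖y - cc‖ ^ z)
    have hdzyC : dz z y C = ‖y - cy‖ ^ z := by
      unfold dz; rw [dif_pos hC]; exact hcye
    have h0 : dz z x C ≤ ‖x - cy‖ ^ z := by
      unfold dz; rw [dif_pos hC]
      exact Finset.inf'_le _ hcyC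
    set A := ‖x - ct x‖ with hA
    set B := ‖y - ct y‖ with hB
    set D := ‖y - cy‖ with hD
    have hA0 : 0 ≤ A := norm_nonneg _
    have hB0 : 0 ≤ B := norm_nonneg _
    have hD0 : 0 ≤ D := norm_nonneg _
    have hB' : ‖ct x - y‖ = B := by rw [← hcty, norm_sub_rev]
    have htri : ‖x - cy‖ ≤ A + (B + D) := by
      have e : x - cy = (x - ct x) + ((ct x - y) + (y - cy)) := by abel
      calc ‖x - cy‖ = ‖(x - ct x) + ((ct x - y) + (y - cy))‖ := by rw [← e]
        _ ≤ ‖x - ct x‖ + ‖(ct x - y) + (y - cy)‖ := norm_add_le _ _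
        _ ≤ A + (B + D) := by
            have := norm_add_le (ct x - y) (y - cy)
            rw [hB'] at this
            linarith
    have h1 : ‖x - cy‖ ^ z ≤ (A + (B + D)) ^ z :=
      Real.rpow_le_rpow (norm_nonneg _) htri hzpos
    have h2 : (A + (B + D)) ^ z ≤ c * (A ^ z + (B + D) ^ z) :=
      mean2_aux hA0 (by positivity) hz
    have h3 : (B + D) ^ z ≤ c * (B ^ z + D ^ z) := mean2_aux hB0 hD0 hz
    have h3' : c * (B + D) ^ z ≤ c * (c * (B ^ z + D ^ z)) :=
      mul_le_mul_of_nonneg_left h3 hc0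
    have step : dz z x C ≤ c * A ^ z + c * c * B ^ z + c * c * D ^ z := by
      nlinarith [h0, h1, h2, h3']
    -- now bound each term
    have hAz : A ^ z ≤ 4 * S := happrox x hx
    have hBz : B ^ z ≤ 4 * dz z y Cstar :=
      le_trans (happrox y hyX)
        (by nlinarith [hdzCstar y hyX])
    have t1 : c * A ^ z ≤ (2 : ℝ) ^ (z + 2) * S := by
      calc c * A ^ z ≤ c * (4 * S) := mul_le_mul_of_nonneg_left hAz hc0
        _ = (2 : ℝ) ^ (z + 1) * S := by rw [e1]; ring
        _ ≤ (2 : ℝ) ^ (z + 2) * S := mul_le_mul_of_nonneg_right m1 hS0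
    have t2 : c * c * B ^ z ≤ (2 : ℝ) ^ (2 * z + 2) * dz z y Cstar := by
      have hcc0 : 0 ≤ c * c := mul_nonneg hc0 hc0
      calc c * c * B ^ z ≤ c * c * (4 * dz z y Cstar) :=
            mul_le_mul_of_nonneg_left hBz hcc0
        _ = (2 : ℝ) ^ (2 * z) * dz z y Cstar := by rw [e2]; ring
        _ ≤ (2 : ℝ) ^ (2 * z + 2) * dz z y Cstar :=
            mul_le_mul_of_nonneg_right m2 (dz_nonneg _ _ _)
    have t3 : c * c * D ^ z ≤ (2 : ℝ) ^ (2 * z + 2) * dz z y C := by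
      rw [hdzyC]
      exact mul_le_mul_of_nonneg_right m3 (Real.rpow_nonneg hD0 z)
    linarith
  -- sum over the cluster
  set K := (2 : ℝ) ^ (2 * z + 2) with hK
  have hK0 : 0 ≤ K := Real.rpow_nonneg (by norm_num) _
  have hsub1 : ∑ y ∈ P, dz z y Cstar ≤ costz z X Cstar :=
    Finset.sum_le_sum_of_subset_of_nonneg (Finset.filter_subset _ _)
      (fun i _ _ => dz_nonneg _ _ _)
  have hsub2 : ∑ y ∈ P, dz z y C ≤ costz z X C :=
    Finset.sum_le_sum_of_subset_of_nonneg (Finset.filter_subset _ _)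
      (fun i _ _ => dz_nonneg _ _ _)
  have sum_le : (P.card : ℝ) * dz z x C ≤
      (P.card : ℝ) * ((2 : ℝ) ^ (z + 2) * S) + K * (costz z X Cstar + costz z X C) := by
    have h1 : (P.card : ℝ) * dz z x C = ∑ _y ∈ P, dz z x C := by
      rw [Finset.sum_const, nsmul_eq_mul]
    have h2 : ∑ _y ∈ P, dz z x C ≤
        ∑ y ∈ P, ((2 : ℝ) ^ (z + 2) * S + K * (dz z y Cstar + dz z y C)) :=
      Finset.sum_le_sum key
    have h3 : ∑ y ∈ P, ((2 : ℝ) ^ (z + 2) * S + K * (dz z y Cstar + dz z y C)) =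
        (P.card : ℝ) * ((2 : ℝ) ^ (z + 2) * S) +
          K * (∑ y ∈ P, dz z y Cstar + ∑ y ∈ P, dz z y C) := by
      rw [Finset.sum_add_distrib, Finset.sum_const, nsmul_eq_mul, ← Finset.mul_sum,
        Finset.sum_add_distrib]
    have h4 : K * (∑ y ∈ P, dz z y Cstar + ∑ y ∈ P, dz z y C) ≤
        K * (costz z X Cstar + costz z X C) :=
      mul_le_mul_of_nonneg_left (by linarith) hK0
    rw [h1]
    exact h2.trans (by rw [h3]; linarith)
  -- divide by cluster size
  calc dz z x C ≤
      ((P.card : ℝ) * ((2 : ℝ) ^ (z + 2) * S) + K * (costz z X Cstar + costz z X C)) /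
        (P.card : ℝ) := by
        rw [le_div_iff₀ hn]
        linarith [sum_le]
    _ = (2 : ℝ) ^ (z + 2) * S + (K / (P.card : ℝ)) * (costz z X Cstar + costz z X C) := by
        field_simp
end

section
/- Let d ≥ 1 be an integer, z ≥ 1 a real number, β, γ ∈ (0, 1), and let r ≥ 1 be an integer with (1 − β)^r ≤ (1 − γ)/3. Let U ⊆ ℝ^d be a finite set and C ⊆ ℝ^d a nonempty finite set. Let t ≥ 1 be an integer and suppose there are finite sets U_0, U_1, …, U_t ⊆ ℝ^d and C_0, …, C_{t−1} and reals μ_0, …, μ_{t−1} ≥ 0 such that: (i) U_0 = U; (ii) for each 0 ≤ i ≤ t−1, C_i ⊆ U_i, |C_i| ≥ β·|U_i|, and U_{i+1} = U_i \ C_i; and (iii) for each 0 ≤ i ≤ t−1, the number of points x ∈ U_i with d_z(x, C) ≥ μ_i is at least (1 − γ)·|U_i|. Then cost_z(U, C) ≥ ((1 − γ)/(2r)) · Σ_{i=0}^{t−1} μ_i · |C_i|. -/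
open scoped Classical
open Finset

/-- **Cost lower bound for an arbitrary center set.** Given the iterative peeling process
U_0 = U, C_i ⊆ U_i with |C_i| ≥ β·|U_i| and U_{i+1} = U_i \ C_i, and thresholds μ_i such
that at least a (1 − γ) fraction of U_i is μ_i-far from C, and (1 − β)^r ≤ (1 − γ)/3,
we have cost_z(U, C) ≥ ((1 − γ)/(2r)) · Σ_{i<t} μ_i · |C_i|. -/
theorem cost_lower_bound_center_set (d : ℕ) (hd : 1 ≤ d) (z : ℝ) (hz : 1 ≤ z)
    (β γ : ℝ) (hβ : β ∈ Set.Ioo (0 : ℝ) 1) (hγ : γ ∈ Set.Ioo (0 : ℝ) 1)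
    (r : ℕ) (hr : 1 ≤ r) (hrβγ : (1 - β) ^ r ≤ (1 - γ) / 3)
    (U C : Finset (EuclideanSpace ℝ (Fin d))) (hC : C.Nonempty)
    (t : ℕ) (ht : 1 ≤ t)
    (Us Cs : ℕ → Finset (EuclideanSpace ℝ (Fin d))) (μ : ℕ → ℝ)
    (hμ : ∀ i < t, 0 ≤ μ i)
    (h0 : Us 0 = U)
    (hstep : ∀ i < t, Cs i ⊆ Us i ∧ (β * ((Us i).card : ℝ) ≤ ((Cs i).card : ℝ)) ∧
      Us (i + 1) = Us i \ Cs i)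
    (hfar : ∀ i < t, (1 - γ) * ((Us i).card : ℝ) ≤
      (((Us i).filter (fun x => μ i ≤ dz z x C)).card : ℝ)) :
    ((1 - γ) / (2 * r)) * ∑ i ∈ Finset.range t, μ i * ((Cs i).card : ℝ) ≤ costz z U C := by
  classical
  obtain ⟨hβ0, hβ1⟩ := hβ
  obtain ⟨hγ0, hγ1⟩ := hγ
  have hdz0 : ∀ x : EuclideanSpace ℝ (Fin d), 0 ≤ dz z x C := by
    intro x
    simp only [dz, dif_pos hC]
    exact Finset.le_inf' hC _ (fun c _ => Real.rpow_nonneg (norm_nonneg _) z)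
  -- monotonicity of the chain
  have hmono : ∀ b a, a ≤ b → b ≤ t → Us b ⊆ Us a := by
    intro b
    induction b with
    | zero => intro a ha _; simp [Nat.le_zero.mp ha]
    | succ n ih =>
      intro a ha hbt
      rcases Nat.eq_or_lt_of_le ha with h | h
      · subst h; exact Finset.Subset.refl _
      · have hn : n < t := hbt
        rw [(hstep n hn).2.2]
        exact Finset.sdiff_subset.trans (ih a (Nat.lt_succ_iff.mp h) (Nat.le_of_lt hbt))
  -- geometric decay
  have hdecay : ∀ i m, i + m ≤ t →
      ((Us (i + m)).card : ℝ) ≤ (1 - β) ^ m * ((Us i).card : ℝ) := by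
    intro i m
    induction m with
    | zero => simp
    | succ m ih =>
      intro h
      have h1 : i + m < t := by omega
      obtain ⟨hsub, hcard, heq⟩ := hstep (i + m) h1
      have hle : (Cs (i + m)).card ≤ (Us (i + m)).card := Finset.card_le_card hsub
      have hcard1 : ((Us (i + m + 1)).card : ℝ) = ((Us (i + m)).card : ℝ) - (Cs (i + m)).card := by
        rw [heq, Finset.card_sdiff_of_subset hsub, Nat.cast_sub hle]
      have hstep1 : ((Us (i + m + 1)).card : ℝ) ≤ (1 - β) * ((Us (i + m)).card : ℝ) := by
        rw [hcard1]; nlinarith [hcard]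
      have : i + (m + 1) = i + m + 1 := rfl
      rw [this]
      calc ((Us (i + m + 1)).card : ℝ) ≤ (1 - β) * ((Us (i + m)).card : ℝ) := hstep1
        _ ≤ (1 - β) * ((1 - β) ^ m * ((Us i).card : ℝ)) := by
            apply mul_le_mul_of_nonneg_left (ih (by omega)) (by linarith)
        _ = (1 - β) ^ (m + 1) * ((Us i).card : ℝ) := by ring
  set F : ℕ → Finset (EuclideanSpace ℝ (Fin d)) :=
    fun i => (Us i).filter (fun x => μ i ≤ dz z x C) with hF
  set G : ℕ → Finset (EuclideanSpace ℝ (Fin d)) :=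
    fun i => if i + r ≤ t then F i \ Us (i + r) else F i with hGdef
  have hFsub : ∀ i, F i ⊆ Us i := fun i => Finset.filter_subset _ _
  have hGF : ∀ i, G i ⊆ F i := by
    intro i
    simp only [hGdef]
    split
    · exact Finset.sdiff_subset
    · exact Finset.Subset.refl _
  have hGU : ∀ i < t, G i ⊆ U := by
    intro i hi
    refine ((hGF i).trans (hFsub i)).trans ?_
    rw [← h0]
    exact hmono i 0 (Nat.zero_le _) (Nat.le_of_lt hi)
  -- lower bound on |G i|
  have hGcard : ∀ i < t, (2 / 3) * (1 - γ) * ((Us i).card : ℝ) ≤ ((G i).card : ℝ) := by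
    intro i hi
    have hUnn : (0 : ℝ) ≤ ((Us i).card : ℝ) := Nat.cast_nonneg _
    by_cases hir : i + r ≤ t
    · have hG : G i = F i \ Us (i + r) := by simp only [hGdef, if_pos hir]
      have hsplit : F i ⊆ (F i \ Us (i + r)) ∪ Us (i + r) := by
        intro x hx
        by_cases hxr : x ∈ Us (i + r)
        · exact Finset.mem_union_right _ hxr
        · exact Finset.mem_union_left _ (Finset.mem_sdiff.mpr ⟨hx, hxr⟩)
      have h1 : ((F i).card : ℝ) ≤ ((G i).card : ℝ) + ((Us (i + r)).card : ℝ) := by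
        rw [hG]
        have := (Finset.card_le_card hsplit).trans (Finset.card_union_le _ _)
        exact_mod_cast this
      have h2 : ((Us (i + r)).card : ℝ) ≤ (1 - γ) / 3 * ((Us i).card : ℝ) :=
        (hdecay i r hir).trans (mul_le_mul_of_nonneg_right hrβγ hUnn)
      have h3 := hfar i hi
      linarith
    · have hG : G i = F i := by simp only [hGdef, if_neg hir]
      have h3 := hfar i hi
      rw [hG]
      nlinarith
  -- sum over G i lower bounded
  have hGsum : ∀ i < t, μ i * ((G i).card : ℝ) ≤ ∑ x ∈ G i, dz z x C := by
    intro i hi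
    have : ((G i).card : ℝ) * μ i ≤ ∑ x ∈ G i, dz z x C := by
      have := Finset.card_nsmul_le_sum (G i) (fun x => dz z x C) (μ i)
        (fun x hx => (Finset.mem_filter.mp (hGF i hx)).2)
      simpa [nsmul_eq_mul] using this
    linarith
  -- disjointness within a residue class
  have hGdisj : ∀ i i', i < i' → i' < t → i % r = i' % r → Disjoint (G i) (G i') := by
    intro i i' hii' hi't hmod
    have hdvd : r ∣ i' - i := (Nat.modEq_iff_dvd' (Nat.le_of_lt hii')).mp hmod
    have hri : r ≤ i' - i := Nat.le_of_dvd (by omega) hdvd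
    have hirle : i + r ≤ i' := by omega
    have hirt : i + r ≤ t := by omega
    have hG : G i = F i \ Us (i + r) := by simp only [hGdef, if_pos hirt]
    rw [Finset.disjoint_left]
    intro x hx hx'
    have hxnot : x ∉ Us (i + r) := by rw [hG] at hx; exact (Finset.mem_sdiff.mp hx).2
    have : x ∈ Us (i + r) :=
      hmono i' (i + r) hirle (Nat.le_of_lt hi't) (hFsub i' (hGF i' hx'))
    exact hxnot this
  -- per residue class, the G-sum is bounded by the cost
  have hclass : ∀ j, ∑ i ∈ (Finset.range t).filter (fun i => i % r = j),
      μ i * ((G i).card : ℝ) ≤ costz z U C := by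
    intro j
    set S := (Finset.range t).filter (fun i => i % r = j) with hS
    have hdisj : (↑S : Set ℕ).PairwiseDisjoint G := by
      intro a ha b hb hab
      simp only [hS, Finset.coe_filter, Set.mem_setOf_eq, Finset.mem_range] at ha hb
      rcases lt_or_gt_of_ne hab with h | h
      · exact hGdisj a b h hb.1 (ha.2.trans hb.2.symm)
      · exact (hGdisj b a h ha.1 (hb.2.trans ha.2.symm)).symm
    calc ∑ i ∈ S, μ i * ((G i).card : ℝ)
        ≤ ∑ i ∈ S, ∑ x ∈ G i, dz z x C := by
          apply Finset.sum_le_sum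
          intro i hi
          exact hGsum i (Finset.mem_range.mp (Finset.mem_filter.mp hi).1)
      _ = ∑ x ∈ S.biUnion G, dz z x C := (Finset.sum_biUnion hdisj).symm
      _ ≤ ∑ x ∈ U, dz z x C := by
          apply Finset.sum_le_sum_of_subset_of_nonneg
          · intro x hx
            obtain ⟨i, hi, hxi⟩ := Finset.mem_biUnion.mp hx
            exact hGU i (Finset.mem_range.mp (Finset.mem_filter.mp hi).1) hxi
          · intro x _ _; exact hdz0 x
      _ = costz z U C := rfl
  -- combine over all residue classes
  have hr0 : 0 < r := hr
  have hfiber : ∑ j ∈ Finset.range r, ∑ i ∈ (Finset.range t).filter (fun i => i % r = j),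
      μ i * ((G i).card : ℝ) = ∑ i ∈ Finset.range t, μ i * ((G i).card : ℝ) :=
    Finset.sum_fiberwise_of_maps_to (fun i _ => Finset.mem_range.mpr (Nat.mod_lt i hr0)) _
  have hcost0 : ∑ i ∈ Finset.range t, μ i * ((G i).card : ℝ) ≤ (r : ℝ) * costz z U C := by
    rw [← hfiber]
    calc ∑ j ∈ Finset.range r, ∑ i ∈ (Finset.range t).filter (fun i => i % r = j),
          μ i * ((G i).card : ℝ)
        ≤ ∑ j ∈ Finset.range r, costz z U C := Finset.sum_le_sum (fun j _ => hclass j)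
      _ = (r : ℝ) * costz z U C := by rw [Finset.sum_const, Finset.card_range]; ring
  -- lower bound the G-sum by the C-sum
  have hmain : (1 - γ) / 2 * ∑ i ∈ Finset.range t, μ i * ((Cs i).card : ℝ)
      ≤ ∑ i ∈ Finset.range t, μ i * ((G i).card : ℝ) := by
    rw [Finset.mul_sum]
    apply Finset.sum_le_sum
    intro i hi
    have hit := Finset.mem_range.mp hi
    have h1 := hGcard i hit
    have h2 : ((Cs i).card : ℝ) ≤ ((Us i).card : ℝ) := by
      exact_mod_cast Finset.card_le_card (hstep i hit).1
    have h3 := hμ i hit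
    have h4 : (0 : ℝ) ≤ ((Cs i).card : ℝ) := Nat.cast_nonneg _
    nlinarith [mul_le_mul_of_nonneg_left h1 h3, mul_le_mul_of_nonneg_left h2 h3]
  -- final arithmetic
  have hrpos : (0 : ℝ) < 2 * (r : ℝ) := by positivity
  rw [div_mul_eq_mul_div, div_le_iff₀ hrpos]
  have := hmain.trans hcost0
  nlinarith [this]
end

section
/- Let d ≥ 1 be an integer, z ≥ 1 a real number, k ≥ 1 an integer, and ε ∈ (0, 0.1). Let X ⊆ ℝ^d be a finite set, let Γ ⊆ ℝ^d be a linear subspace, and let π : ℝ^d → Γ denote the orthogonal projection onto Γ. For a nonempty finite set C ⊆ ℝ^d, define q(C) := Σ_{x ∈ X} ( min_{c ∈ C} ‖π(x) − c‖₂² + ‖x − π(x)‖₂² )^{z/2}. Assume that for every set C ⊆ ℝ^d with |C| = k, (1 − ε)·cost_z(X, C) ≤ q(C) ≤ (1 + ε)·cost_z(X, C). Let C₁ = {c_1, …, c_k} and C₂ = {c'_1, …, c'_k} be two sets of k points in ℝ^d such that for every i ∈ [k], π(c_i) = π(c'_i) and ‖c_i − π(c_i)‖₂ = ‖c'_i −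 π(c'_i)‖₂. Then cost_z(X, C₁) ≤ ((1 + ε)/(1 − ε)) · cost_z(X, C₂). -/
open scoped Classical
open Finset

/-!
Pythagoras in the direction orthogonal to `Γ` gives, for every `y ∈ Γ` and every center `c`,
`‖y - c‖² = ‖y - π c‖² + ‖c - π c‖²`, so equivalent center sets are at the same distance from
every point of `Γ`. The surrogate cost `q` only measures distances from the projected points
`π x ∈ Γ`, hence `q(C₁) = q(C₂)`, and the two-sided approximation gives
`(1 - ε) cost(X, C₁) ≤ q(C₁) = q(C₂) ≤ (1 + ε) cost(X, C₂)`.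
-/

section

variable {E : Type*} [NormedAddCommGroup E] [InnerProductSpace ℝ E]
  (Γ : Submodule ℝ E) [Γ.HasOrthogonalProjection]

/-- The surrogate cost `q(C)`. -/
noncomputable def projectedCost (z : ℝ) (X C : Finset E) (hC : C.Nonempty) : ℝ :=
  ∑ x ∈ X, (C.inf' hC (fun c => ‖(Γ.orthogonalProjectionOnto x : E) - c‖ ^ 2) +
    ‖x - (Γ.orthogonalProjectionOnto x : E)‖ ^ 2) ^ (z / 2)

theorem Submodule.norm_sub_sq_eq_norm_sub_orthogonalProjectionOnto_sq_add {y : E} (hy : y ∈ Γ)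
    (w : E) :
    ‖y - w‖ ^ 2 = ‖y - (Γ.orthogonalProjectionOnto w : E)‖ ^ 2 +
      ‖w - (Γ.orthogonalProjectionOnto w : E)‖ ^ 2 := by
  have horth : inner ℝ (y - (Γ.orthogonalProjectionOnto w : E))
      (w - (Γ.orthogonalProjectionOnto w : E)) = 0 :=
    Submodule.inner_right_of_mem_orthogonal (Γ.sub_mem hy (Γ.orthogonalProjectionOnto w).2)
      (Γ.sub_starProjection_mem_orthogonal w)
  rw [show y - w = (y - (Γ.orthogonalProjectionOnto w : E)) -
      (w - (Γ.orthogonalProjectionOnto w : E)) by abel, norm_sub_sq_real, horth]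
  ring

theorem Submodule.norm_sub_eq_of_orthogonalProjectionOnto_eq {y : E} (hy : y ∈ Γ) {w w' : E}
    (hproj : Γ.orthogonalProjectionOnto w = Γ.orthogonalProjectionOnto w')
    (hheight : ‖w - (Γ.orthogonalProjectionOnto w : E)‖ =
      ‖w' - (Γ.orthogonalProjectionOnto w' : E)‖) :
    ‖y - w‖ = ‖y - w'‖ := by
  rw [← sq_eq_sq₀ (norm_nonneg _) (norm_nonneg _),
    Γ.norm_sub_sq_eq_norm_sub_orthogonalProjectionOnto_sq_add hy w,
    Γ.norm_sub_sq_eq_norm_sub_orthogonalProjectionOnto_sq_add hy w', hheight, hproj]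

theorem projectedCost_image_eq [DecidableEq E] {ι : Type*} [Fintype ι] (z : ℝ) (X : Finset E)
    {c c' : ι → E}
    (hproj : ∀ i, Γ.orthogonalProjectionOnto (c i) = Γ.orthogonalProjectionOnto (c' i))
    (hheight : ∀ i, ‖c i - (Γ.orthogonalProjectionOnto (c i) : E)‖ =
      ‖c' i - (Γ.orthogonalProjectionOnto (c' i) : E)‖)
    (hC : (univ.image c).Nonempty) (hC' : (univ.image c').Nonempty) :
    projectedCost Γ z X (univ.image c) hC = projectedCost Γ z X (univ.image c') hC' := by
  refine sum_congr rfl fun x _ => ?_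
  rw [inf'_image, inf'_image]
  congr 2
  refine inf'_congr _ rfl fun i _ => ?_
  rw [Function.comp_apply, Function.comp_apply, Γ.norm_sub_eq_of_orthogonalProjectionOnto_eq
    (Γ.orthogonalProjectionOnto x).2 (hproj i) (hheight i)]

end

theorem equivalent_center_sets_cost_general (d : ℕ) (z : ℝ)
    (k : ℕ) (hk : 1 ≤ k) (ε : ℝ) (hε : ε ∈ Set.Ioo (0 : ℝ) 0.1)
    (X : Finset (EuclideanSpace ℝ (Fin d)))
    (Γ : Submodule ℝ (EuclideanSpace ℝ (Fin d)))
    (hq : ∀ C : Finset (EuclideanSpace ℝ (Fin d)), ∀ hC : C.Nonempty, C.card = k →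
      (1 - ε) * costz z X C ≤
        (∑ x ∈ X, (C.inf' hC (fun cc =>
            ‖(Submodule.orthogonalProjectionOnto Γ x : EuclideanSpace ℝ (Fin d)) - cc‖ ^ 2) +
          ‖x - (Submodule.orthogonalProjectionOnto Γ x : EuclideanSpace ℝ (Fin d))‖ ^ 2) ^ (z / 2)) ∧
      (∑ x ∈ X, (C.inf' hC (fun cc =>
            ‖(Submodule.orthogonalProjectionOnto Γ x : EuclideanSpace ℝ (Fin d)) - cc‖ ^ 2) +
          ‖x - (Submodule.orthogonalProjectionOnto Γ x : EuclideanSpace ℝ (Fin d))‖ ^ 2) ^ (z / 2)) ≤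
        (1 + ε) * costz z X C)
    (c c' : Fin k → EuclideanSpace ℝ (Fin d))
    (hc : Function.Injective c) (hc' : Function.Injective c')
    (hproj : ∀ i, Submodule.orthogonalProjectionOnto Γ (c i) = Submodule.orthogonalProjectionOnto Γ (c' i))
    (hheight : ∀ i,
      ‖c i - (Submodule.orthogonalProjectionOnto Γ (c i) : EuclideanSpace ℝ (Fin d))‖ =
        ‖c' i - (Submodule.orthogonalProjectionOnto Γ (c' i) : EuclideanSpace ℝ (Fin d))‖) :
    costz z X (Finset.univ.image c) ≤
      ((1 + ε) / (1 - ε)) * costz z X (Finset.univ.image c') := by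
  have hne : (univ : Finset (Fin k)).Nonempty := univ_nonempty_iff.mpr ⟨⟨0, hk⟩⟩
  have hlower : (1 - ε) * costz z X (univ.image c) ≤ projectedCost Γ z X _ (hne.image c) :=
    (hq _ (hne.image c) (by simp [card_image_of_injective _ hc])).1
  have hupper : projectedCost Γ z X _ (hne.image c') ≤ (1 + ε) * costz z X (univ.image c') :=
    (hq _ (hne.image c') (by simp [card_image_of_injective _ hc'])).2
  have hq_eq := projectedCost_image_eq Γ z X hproj hheight (hne.image c) (hne.image c')
  have h1ε : 0 < 1 - ε := by linarith [hε.2]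
  rw [div_mul_eq_mul_div, le_div_iff₀ h1ε]
  linarith

/-- **Representativeness of equivalent center sets.** If for every k-point set C the
quantity q(C) = Σ_{x ∈ X} (min_{c ∈ C} ‖π(x) − c‖² + ‖x − π(x)‖²)^{z/2} is a
(1 ± ε)-approximation of cost_z(X, C), then for two k-point center sets C₁ = {c_i} and
C₂ = {c'_i} that are equivalent with respect to Γ (matching projections and matching
distances to Γ), cost_z(X, C₁) ≤ ((1 + ε)/(1 − ε)) · cost_z(X, C₂). -/
theorem equivalent_center_sets_cost (d : ℕ) (hd : 1 ≤ d) (z : ℝ) (hz : 1 ≤ z)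
    (k : ℕ) (hk : 1 ≤ k) (ε : ℝ) (hε : ε ∈ Set.Ioo (0 : ℝ) 0.1)
    (X : Finset (EuclideanSpace ℝ (Fin d)))
    (Γ : Submodule ℝ (EuclideanSpace ℝ (Fin d)))
    (hq : ∀ C : Finset (EuclideanSpace ℝ (Fin d)), ∀ hC : C.Nonempty, C.card = k →
      (1 - ε) * costz z X C ≤
        (∑ x ∈ X, (C.inf' hC (fun cc =>
            ‖(Submodule.orthogonalProjectionOnto Γ x : EuclideanSpace ℝ (Fin d)) - cc‖ ^ 2) +
          ‖x - (Submodule.orthogonalProjectionOnto Γ x : EuclideanSpace ℝ (Fin d))‖ ^ 2) ^ (z / 2)) ∧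
      (∑ x ∈ X, (C.inf' hC (fun cc =>
            ‖(Submodule.orthogonalProjectionOnto Γ x : EuclideanSpace ℝ (Fin d)) - cc‖ ^ 2) +
          ‖x - (Submodule.orthogonalProjectionOnto Γ x : EuclideanSpace ℝ (Fin d))‖ ^ 2) ^ (z / 2)) ≤
        (1 + ε) * costz z X C)
    (c c' : Fin k → EuclideanSpace ℝ (Fin d))
    (hc : Function.Injective c) (hc' : Function.Injective c')
    (hproj : ∀ i, Submodule.orthogonalProjectionOnto Γ (c i) = Submodule.orthogonalProjectionOnto Γ (c' i))
    (hheight : ∀ i,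
      ‖c i - (Submodule.orthogonalProjectionOnto Γ (c i) : EuclideanSpace ℝ (Fin d))‖ =
        ‖c' i - (Submodule.orthogonalProjectionOnto Γ (c' i) : EuclideanSpace ℝ (Fin d))‖) :
    costz z X (Finset.univ.image c) ≤
      ((1 + ε) / (1 - ε)) * costz z X (Finset.univ.image c') :=
  equivalent_center_sets_cost_general d z k hk ε hε X Γ hq c c' hc hc' hproj hheight
end
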